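/- If X is a finite set, then every ideal of the free commutative dialgebra Di[X] over a field k has a finite Gröbner–Shirshov basis with respect to any monomial-center ordering. -/

import Mathlib

namespace CDi

/-- A "diword": a basis element of the free commutative disemigroup `⌊X⁺⌋₁ ∪ ⌊XX⌋₂`:
a nonempty multiset (commutative word) together with a label `1`, or label `2`
when the word has length `2`. -/
def DiWord (X : Type*) :=
  {p : Multiset X × ℕ // p.1 ≠ 0 ∧ (p.2 = 1 ∨ (p.2 = 2 ∧ Multiset.card p.1 = 2))}

namespace DiWord

variable {X : Type*}

def word (a : DiWord X) : Multiset X := a.1.1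

def lbl (a : DiWord X) : ℕ := a.1.2

theorem word_ne (a : DiWord X) : a.word ≠ 0 := a.2.1

theorem add_word_ne (a b : DiWord X) : a.word + b.word ≠ 0 := by
  intro h
  have h1 := congrArg Multiset.card h
  simp only [Multiset.card_add, Multiset.card_zero] at h1
  have := a.word_ne
  rw [← Multiset.card_pos] at this
  omega

/-- The operation `⊣` on `Disgp[X]`: always produces label 1. -/
def pd (a b : DiWord X) : DiWord X :=
  ⟨(a.word + b.word, 1), add_word_ne a b, Or.inl rfl⟩

/-- The operation `⊢` on `Disgp[X]`: produces label 2 exactly when both factors are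
single letters (total length 2), label 1 otherwise. -/
def pv (a b : DiWord X) : DiWord X :=
  ⟨(a.word + b.word, if Multiset.card (a.word + b.word) = 2 then 2 else 1), by
    refine ⟨add_word_ne a b, ?_⟩
    split_ifs with h
    · exact Or.inr ⟨rfl, h⟩
    · exact Or.inl rfl⟩

/-- `⌊u⌋₁` for a nonempty commutative word `u`. -/
def m1 (u : Multiset X) (h : u ≠ 0) : DiWord X := ⟨(u, 1), h, Or.inl rfl⟩

/-- A single letter `x ∈ X`, i.e. `⌊x⌋₁`. -/
def mX (x : X) : DiWord X := m1 {x} (by simp)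

/-- `⌊xx'⌋₂`. -/
def m2 (x y : X) : DiWord X := ⟨({x, y}, 2), by simp, Or.inr ⟨rfl, by simp⟩⟩

end DiWord
/-- A monomial ordering on the free commutative semigroup `⌊X⁺⌋` (nonempty multisets
over `X`): a well-ordering compatible with multiplication. -/
structure MonOrd (X : Type*) where
  lt : Multiset X → Multiset X → Prop
  wf : WellFounded fun a b : {u : Multiset X // u ≠ 0} => lt a.1 b.1
  trans : ∀ u v w : Multiset X, u ≠ 0 → v ≠ 0 → w ≠ 0 → lt u v → lt v w → lt u w
  total : ∀ u v : Multiset X, u ≠ 0 → v ≠ 0 → u ≠ v → lt u v ∨ lt v u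
  compat : ∀ u v w : Multiset X, u ≠ 0 → v ≠ 0 → lt u v → lt (u + w) (v + w)

/-- The monomial-center ordering on `⌊X⁺⌋₁ ∪ ⌊XX⌋₂` induced by a monomial ordering:
compare the words first, then the labels. -/
def MonOrd.dlt {X : Type*} (o : MonOrd X) (a b : DiWord X) : Prop :=
  o.lt a.word b.word ∨ (a.word = b.word ∧ a.lbl < b.lbl)

def MonOrd.dle {X : Type*} (o : MonOrd X) (a b : DiWord X) : Prop :=
  a = b ∨ o.dlt a b

variable {X k : Type*} [Ring k]

/-- The free commutative dialgebra `Di[X]` (polynomial diring over `k`): the free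
`k`-module on the diwords. -/
abbrev Di (X k : Type*) [Ring k] := DiWord X →₀ k

/-- The basis diword `m` viewed as an element of `Di[X]`. -/
noncomputable def mono (m : DiWord X) : Di X k := Finsupp.single m 1

/-- The operation `⊣` on `Di[X]`, extended bilinearly. -/
noncomputable def pL (f g : Di X k) : Di X k :=
  f.sum fun u a => g.sum fun v b => Finsupp.single (DiWord.pd u v) (a * b)

/-- The operation `⊢` on `Di[X]`, extended bilinearly. -/
noncomputable def pR (f g : Di X k) : Di X k :=
  f.sum fun u a => g.sum fun v b => Finsupp.single (DiWord.pv u v) (a * b)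

/-- `m` is the leading monomial of `f` (w.r.t. the monomial-center ordering `o`). -/
def IsLM (o : MonOrd X) (f : Di X k) (m : DiWord X) : Prop :=
  m ∈ f.support ∧ ∀ u ∈ f.support, u ≠ m → o.dlt u m

/-- `f` is strong: the associative word of its leading monomial is strictly greater than
the associative word of every other monomial in its support (equivalently `f̃ > r̃_f`). -/
def IsStrong (o : MonOrd X) (f : Di X k) : Prop :=
  ∃ m, IsLM o f m ∧ ∀ u ∈ f.support, u ≠ m → o.lt u.word m.word

/-- Normal `S`-polynomials: `s`, `s ⊢ x` (when `|s̃| = 1`), or `s ⊣ ⌊a⌋₁` (when `s` is strong). -/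
def IsNormal (o : MonOrd X) (S : Set (Di X k)) (g : Di X k) : Prop :=
  g ∈ S ∨
    (∃ s ∈ S, ∃ x : X, (∃ m, IsLM o s m ∧ Multiset.card m.word = 1) ∧
      g = pR s (mono (DiWord.mX x))) ∨
    (∃ s ∈ S, ∃ a : Multiset X, ∃ ha : a ≠ 0, IsStrong o s ∧
      g = pL s (mono (DiWord.m1 a ha)))

/-- `m ∈ Irr(S)`: `m` is not the leading monomial of any normal `S`-polynomial. -/
def Irr (o : MonOrd X) (S : Set (Di X k)) (m : DiWord X) : Prop :=
  ∀ g : Di X k, IsNormal o S g → ¬ IsLM o g m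

/-- Every element of `S` is monic. -/
def MonicSet (o : MonOrd X) (S : Set (Di X k)) : Prop :=
  ∀ s ∈ S, ∃ m, IsLM o s m ∧ s m = 1

/-- `h` is trivial modulo `S`: `h` is a linear combination of normal `S`-polynomials whose
leading monomials are `≤` the leading monomial of `h`. -/
def TrivialMod (o : MonOrd X) (S : Set (Di X k)) (h : Di X k) : Prop :=
  ∃ (n : ℕ) (α : Fin n → k) (g : Fin n → Di X k),
    (∀ i, IsNormal o S (g i)) ∧ h = ∑ i, α i • g i ∧
    ∀ i, α i ≠ 0 → ∀ mi mh, IsLM o (g i) mi → IsLM o h mh → o.dle mi mh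

/-- The compositions of elements of a (monic) set `S`: multiplication, special, equal,
short intersection, equal multiplication and long intersection compositions. -/
def IsComp (o : MonOrd X) (S : Set (Di X k)) (h : Di X k) : Prop :=
  -- multiplication composition
  (∃ f ∈ S, ¬ IsStrong o f ∧ ∃ x : X,
      h = pR f (mono (DiWord.mX x)) ∨ h = pL f (mono (DiWord.mX x))) ∨
  -- special composition
  (∃ f ∈ S, IsStrong o f ∧ (∃ m, IsLM o f m ∧ 1 < Multiset.card m.word) ∧
      (∃ u ∈ f.support, ∃ x : X, u = DiWord.mX x) ∧
      ∃ x : X, h = pR f (mono (DiWord.mX x)) - pL f (mono (DiWord.mX x))) ∨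
  -- equal composition
  (∃ f ∈ S, ∃ g ∈ S, f ≠ g ∧ (∃ m, IsLM o f m ∧ IsLM o g m) ∧ h = f - g) ∨
  -- short intersection composition
  (∃ f ∈ S, ∃ g ∈ S, (∃ mf, IsLM o f mf ∧ Multiset.card mf.word = 2) ∧
      (∃ mg, IsLM o g mg ∧ Multiset.card mg.word = 1) ∧
      ∃ x : X, ∃ gx : Di X k,
        (gx = pR g (mono (DiWord.mX x)) ∨ (IsStrong o g ∧ gx = pL g (mono (DiWord.mX x)))) ∧
        (∃ m, IsLM o f m ∧ IsLM o gx m) ∧ h = f - gx) ∨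
  -- equal multiplication composition
  (∃ f ∈ S, ∃ g ∈ S, IsStrong o f ∧ IsStrong o g ∧
      ∃ mf mg, IsLM o f mf ∧ IsLM o g mg ∧
        3 < Multiset.card mf.word + Multiset.card mg.word ∧
        mf ≠ mg ∧ mf.word = mg.word ∧
        ∃ x : X, h = pL f (mono (DiWord.mX x)) - pL g (mono (DiWord.mX x))) ∨
  -- long intersection composition
  (∃ f ∈ S, ∃ g ∈ S, IsStrong o f ∧ IsStrong o g ∧
      ∃ mf mg, IsLM o f mf ∧ IsLM o g mg ∧
        3 < Multiset.card mf.word + Multiset.card mg.word ∧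
        mf ≠ mg ∧ mf.word ≠ mg.word ∧
        ∃ w a b : Multiset X,
          mf.word ≤ w ∧ mg.word ≤ w ∧ (∀ w', mf.word ≤ w' → mg.word ≤ w' → w ≤ w') ∧
          mf.word + a = w ∧ mg.word + b = w ∧
          Multiset.card w < Multiset.card mf.word + Multiset.card mg.word ∧
          ∃ hb : b ≠ 0,
            ((a = 0 ∧ h = f - pL g (mono (DiWord.m1 b hb))) ∨
              (∃ ha : a ≠ 0,
                h = pL f (mono (DiWord.m1 a ha)) - pL g (mono (DiWord.m1 b hb)))))

/-- `S` is a Gröbner–Shirshov basis: `S` is monic and every composition is trivial mod `S`. -/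
def IsGSB (o : MonOrd X) (S : Set (Di X k)) : Prop :=
  MonicSet o S ∧ ∀ h, IsComp o S h → TrivialMod o S h

/-- Membership in the (two-sided) ideal `Id(S)` of `Di[X]` generated by `S`. -/
inductive InIdeal (S : Set (Di X k)) : Di X k → Prop
  | mem {f} : f ∈ S → InIdeal S f
  | zero : InIdeal S 0
  | add {f g} : InIdeal S f → InIdeal S g → InIdeal S (f + g)
  | smul (c : k) {f} : InIdeal S f → InIdeal S (c • f)
  | pL_left (f) {g} : InIdeal S g → InIdeal S (pL f g)
  | pL_right (f) {g} : InIdeal S g → InIdeal S (pL g f)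
  | pR_left (f) {g} : InIdeal S g → InIdeal S (pR f g)
  | pR_right (f) {g} : InIdeal S g → InIdeal S (pR g f)

/-- `I` is an ideal of `Di[X]`. -/
def IsIdeal (I : Set (Di X k)) : Prop :=
  (0 : Di X k) ∈ I ∧ (∀ f g, f ∈ I → g ∈ I → f + g ∈ I) ∧
    (∀ (c : k) f, f ∈ I → c • f ∈ I) ∧
    ∀ f g, g ∈ I → pL f g ∈ I ∧ pL g f ∈ I ∧ pR f g ∈ I ∧ pR g f ∈ I

/-- `Id(S)` as a `k`-submodule of `Di[X]`. -/
def idealSub (S : Set (Di X k)) : Submodule k (Di X k) where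
  carrier := {f | InIdeal S f}
  add_mem' := fun hf hg => InIdeal.add hf hg
  zero_mem' := InIdeal.zero
  smul_mem' := fun c _ hf => InIdeal.smul c hf

/-!
Let `I` be an ideal. Pick monic elements of `I` whose leading monomials are all label-2 leading
monomials of `I` (finitely many, since `X` is finite) together with the label-1 leading monomials
`⌊w⌋₁` whose word `w` is minimal under divisibility (finitely many by Dickson's lemma). Every
leading monomial `⌊u⌋₁` of `I` is `⌊w⌋₁` or `⌊w⌋₁ ⊣ ⌊u - w⌋₁` for such a `w`, and label-1 elements are strong,
so every leading monomial of `I` is that of a monic normal polynomial of this set `S`. Repeatedly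
cancelling leading monomials then writes every element of `I` as a combination of normal
`S`-polynomials with leading monomials no larger than its own; in particular `I = Id(S)` and
every composition, which lies in `Id(S)`, is trivial modulo `S`.
-/

theorem DiWord.ext {a b : DiWord X} (hw : a.word = b.word) (hl : a.lbl = b.lbl) : a = b :=
  Subtype.ext (Prod.ext hw hl)

theorem DiWord.lbl_eq_one_or_two (a : DiWord X) : a.lbl = 1 ∨ a.lbl = 2 :=
  a.2.2.imp_right And.left

theorem DiWord.card_word_of_lbl_eq_two {a : DiWord X} (h : a.lbl = 2) :
    Multiset.card a.word = 2 := by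
  rcases a.2.2 with h1 | ⟨-, h2⟩
  · exact absurd (h1.symm.trans h) (by decide)
  · exact h2

instance Multiset.wellQuasiOrderedLE_of_finite {α : Type*} [Finite α] :
    WellQuasiOrderedLE (Multiset α) := by
  classical
  exact (Finsupp.orderIsoMultiset (ι := α)).wellQuasiOrderedLE_iff.1 inferInstance

namespace MonOrd

variable (o : MonOrd X)

theorem lt_irrefl {u : Multiset X} (hu : u ≠ 0) : ¬ o.lt u u :=
  fun h => o.wf.asymmetric ⟨u, hu⟩ ⟨u, hu⟩ h h

theorem dlt_irrefl (a : DiWord X) : ¬ o.dlt a a := by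
  rintro (h | ⟨-, h⟩)
  · exact o.lt_irrefl a.word_ne h
  · exact Nat.lt_irrefl _ h

theorem dlt_trans {a b c : DiWord X} (hab : o.dlt a b) (hbc : o.dlt b c) : o.dlt a c := by
  rcases hab with hab | ⟨hab, hab'⟩ <;> rcases hbc with hbc | ⟨hbc, hbc'⟩
  · exact Or.inl (o.trans _ _ _ a.word_ne b.word_ne c.word_ne hab hbc)
  · exact Or.inl (hbc ▸ hab)
  · exact Or.inl (hab ▸ hbc)
  · exact Or.inr ⟨hab.trans hbc, hab'.trans hbc'⟩

theorem dle_dlt_trans {a b c : DiWord X} (hab : o.dle a b) (hbc : o.dlt b c) : o.dlt a c := by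
  rcases hab with rfl | hab
  · exact hbc
  · exact o.dlt_trans hab hbc

theorem dlt_total {a b : DiWord X} (hne : a ≠ b) : o.dlt a b ∨ o.dlt b a := by
  by_cases hw : a.word = b.word
  · have hl : a.lbl ≠ b.lbl := fun hl => hne (DiWord.ext hw hl)
    rcases Nat.lt_or_gt_of_ne hl with h | h
    · exact Or.inl (Or.inr ⟨hw, h⟩)
    · exact Or.inr (Or.inr ⟨hw.symm, h⟩)
  · exact (o.total _ _ a.word_ne b.word_ne hw).imp Or.inl Or.inl

theorem dlt_wf : WellFounded o.dlt := by
  refine Subrelation.wf ?_ (InvImage.wf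
    (fun a : DiWord X => ((⟨a.word, a.word_ne⟩ : {u : Multiset X // u ≠ 0}), a.lbl))
    (WellFounded.prod_lex o.wf Nat.lt_wfRel.wf))
  intro a b hab
  rcases hab with h | ⟨hw, hl⟩
  · exact Prod.Lex.left _ _ h
  · simp only [InvImage, hw]
    exact Prod.Lex.right _ hl

theorem exists_greatest (s : Finset (DiWord X)) (hs : s.Nonempty) :
    ∃ m ∈ s, ∀ u ∈ s, u ≠ m → o.dlt u m := by
  classical
  induction s using Finset.induction_on with
  | empty => exact absurd hs Finset.not_nonempty_empty
  | @insert a s ha ih =>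
    rcases s.eq_empty_or_nonempty with rfl | hs
    · exact ⟨a, Finset.mem_insert_self a ∅, fun u hu hne => absurd (by simpa using hu) hne⟩
    obtain ⟨m, hm, hmax⟩ := ih hs
    have ham : a ≠ m := fun h => ha (h ▸ hm)
    rcases o.dlt_total ham with h | h
    · refine ⟨m, Finset.mem_insert_of_mem hm, fun u hu hne => ?_⟩
      rcases Finset.mem_insert.1 hu with rfl | hu
      exacts [h, hmax u hu hne]
    · refine ⟨a, Finset.mem_insert_self a s, fun u hu hne => ?_⟩
      rcases Finset.mem_insert.1 hu with rfl | hu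
      · exact absurd rfl hne
      by_cases hum : u = m
      exacts [hum ▸ h, o.dlt_trans (hmax u hu hum) h]

end MonOrd

section LeadingMonomial

variable (o : MonOrd X)

theorem exists_isLM {f : Di X k} (hf : f ≠ 0) : ∃ m, IsLM o f m :=
  o.exists_greatest f.support (Finsupp.support_nonempty_iff.2 hf)

variable {o}

theorem IsLM.unique {f : Di X k} {m m' : DiWord X} (h : IsLM o f m) (h' : IsLM o f m') :
    m = m' := by
  by_contra hne
  exact o.dlt_irrefl m (o.dlt_trans (h'.2 m h.1 hne) (h.2 m' h'.1 (Ne.symm hne)))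

theorem IsLM.smul [IsDomain k] {f : Di X k} {m : DiWord X} (h : IsLM o f m) {c : k}
    (hc : c ≠ 0) : IsLM o (c • f) m := by
  unfold IsLM
  rwa [Finsupp.support_smul_eq hc]

theorem isLM_single_add {m : DiWord X} {c : k} (hc : c ≠ 0) {r : Di X k}
    (hr : ∀ u ∈ r.support, o.dlt u m) :
    IsLM o (Finsupp.single m c + r) m ∧ (Finsupp.single m c + r) m = c := by
  classical
  have hrm : r m = 0 := Finsupp.notMem_support_iff.1 fun h => o.dlt_irrefl m (hr m h)
  have hcoeff : (Finsupp.single m c + r) m = c := by simp [hrm]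
  refine ⟨⟨Finsupp.mem_support_iff.2 (by rw [hcoeff]; exact hc), fun u hu hne => ?_⟩, hcoeff⟩
  rcases Finset.mem_union.1 (Finsupp.support_add hu) with hu | hu
  · exact absurd (Finset.mem_singleton.1 (Finsupp.support_single_subset hu)) hne
  · exact hr u hu

theorem dlt_of_mem_support_sub_smul {h g : Di X k} {m : DiWord X} (hh : IsLM o h m)
    (hg : IsLM o g m) (hg1 : g m = 1) : ∀ u ∈ (h - h m • g).support, o.dlt u m := by
  intro u hu
  have hum : u ≠ m := by
    rintro rfl
    exact Finsupp.mem_support_iff.1 hu (by simp [hg1])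
  by_cases hhu : h u = 0
  · have hgu : g u ≠ 0 := fun hgu => Finsupp.mem_support_iff.1 hu (by simp [hhu, hgu])
    exact hg.2 u (Finsupp.mem_support_iff.2 hgu) hum
  · exact hh.2 u (Finsupp.mem_support_iff.2 hhu) hum

theorem lt_word_of_isLM_of_lbl_eq_one {f : Di X k} {m : DiWord X} (hm : IsLM o f m)
    (h1 : m.lbl = 1) : ∀ u ∈ f.support, u ≠ m → o.lt u.word m.word := by
  intro u hu hne
  rcases hm.2 u hu hne with h | ⟨-, hl⟩
  · exact h
  · rcases u.lbl_eq_one_or_two with h2 | h2 <;> omega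

theorem pL_mono_eq_mapDomain (f : Di X k) (n : DiWord X) :
    pL f (mono n) = f.mapDomain (DiWord.pd · n) := by
  unfold pL mono Finsupp.mapDomain
  refine Finsupp.sum_congr fun u _ => ?_
  rw [Finsupp.sum_single_index (by rw [mul_zero, Finsupp.single_zero]), mul_one]

theorem isLM_pL_m1 {f : Di X k} {m : DiWord X} (hm : IsLM o f m)
    (hstrong : ∀ u ∈ f.support, u ≠ m → o.lt u.word m.word) (a : Multiset X) (ha : a ≠ 0) :
    IsLM o (pL f (mono (DiWord.m1 a ha))) (DiWord.pd m (DiWord.m1 a ha)) ∧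
      pL f (mono (DiWord.m1 a ha)) (DiWord.pd m (DiWord.m1 a ha)) = f m := by
  classical
  have hsplit : pL f (mono (DiWord.m1 a ha)) = Finsupp.single (DiWord.pd m (DiWord.m1 a ha)) (f m)
      + (f.erase m).mapDomain (DiWord.pd · (DiWord.m1 a ha)) := by
    conv_lhs => rw [pL_mono_eq_mapDomain, ← Finsupp.single_add_erase m f]
    rw [Finsupp.mapDomain_add, Finsupp.mapDomain_single]
  rw [hsplit]
  refine isLM_single_add (Finsupp.mem_support_iff.1 hm.1) fun u hu => ?_
  obtain ⟨v, hv, rfl⟩ := Finset.mem_image.1 (Finsupp.mapDomain_support hu)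
  rw [Finsupp.support_erase, Finset.mem_erase] at hv
  exact Or.inl (o.compat _ _ a v.word_ne m.word_ne (hstrong v hv.2 hv.1))

end LeadingMonomial

section Ideal

variable {S : Set (Di X k)}

theorem InIdeal.sub {f g : Di X k} (hf : InIdeal S f) (hg : InIdeal S g) : InIdeal S (f - g) :=
  (idealSub S).sub_mem hf hg

theorem InIdeal.mem_of_subset {I : Set (Di X k)} (hI : IsIdeal I) (hS : S ⊆ I) {f : Di X k}
    (hf : InIdeal S f) : f ∈ I := by
  induction hf with
  | mem h => exact hS h
  | zero => exact hI.1
  | add _ _ ihf ihg => exact hI.2.1 _ _ ihf ihg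
  | smul c _ ih => exact hI.2.2.1 c _ ih
  | pL_left f _ ih => exact (hI.2.2.2 f _ ih).1
  | pL_right f _ ih => exact (hI.2.2.2 f _ ih).2.1
  | pR_left f _ ih => exact (hI.2.2.2 f _ ih).2.2.1
  | pR_right f _ ih => exact (hI.2.2.2 f _ ih).2.2.2

def IsIdeal.toSubmodule {I : Set (Di X k)} (hI : IsIdeal I) : Submodule k (Di X k) where
  carrier := I
  add_mem' := hI.2.1 _ _
  zero_mem' := hI.1
  smul_mem' := hI.2.2.1

variable {o : MonOrd X}

theorem IsNormal.inIdeal {g : Di X k} (hg : IsNormal o S g) : InIdeal S g := by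
  rcases hg with hg | ⟨s, hs, x, -, rfl⟩ | ⟨s, hs, a, ha, -, rfl⟩
  · exact .mem hg
  · exact .pR_right _ (.mem hs)
  · exact .pL_right _ (.mem hs)

theorem TrivialMod.inIdeal {h : Di X k} (hh : TrivialMod o S h) : InIdeal S h := by
  obtain ⟨n, α, g, hg, rfl, -⟩ := hh
  exact (idealSub S).sum_mem fun i _ => (idealSub S).smul_mem (α i) (hg i).inIdeal

theorem IsComp.inIdeal {h : Di X k} (hh : IsComp o S h) : InIdeal S h := by
  have L : ∀ {f}, f ∈ S → ∀ q, InIdeal S (pL f q) := fun hf q => .pL_right q (.mem hf)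
  have R : ∀ {f}, f ∈ S → ∀ q, InIdeal S (pR f q) := fun hf q => .pR_right q (.mem hf)
  rcases hh with ⟨f, hf, -, x, rfl | rfl⟩ | ⟨f, hf, -, -, -, x, rfl⟩ |
    ⟨f, hf, g, hg, -, -, rfl⟩ | ⟨f, hf, g, hg, -, -, x, gx, hgx, -, rfl⟩ |
    ⟨f, hf, g, hg, -, -, mf, mg, -, -, -, -, -, x, rfl⟩ |
    ⟨f, hf, g, hg, -, -, mf, mg, -, -, -, -, -, w, a, b, -, -, -, -, -, -, hb, ⟨-, rfl⟩ | ⟨ha, rfl⟩⟩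
  · exact R hf _
  · exact L hf _
  · exact (R hf _).sub (L hf _)
  · exact (InIdeal.mem hf).sub (.mem hg)
  · rcases hgx with rfl | ⟨-, rfl⟩
    exacts [(InIdeal.mem hf).sub (R hg _), (InIdeal.mem hf).sub (L hg _)]
  · exact (L hf _).sub (L hg _)
  · exact (InIdeal.mem hf).sub (L hg _)
  · exact (L hf _).sub (L hg _)

end Ideal

section Reduction

variable {o : MonOrd X} {S : Set (Di X k)}

theorem trivialMod_zero : TrivialMod o S 0 :=
  ⟨0, Fin.elim0, Fin.elim0, fun i => i.elim0, by simp, fun i => i.elim0⟩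

theorem trivialMod_of_forall_isLM {h : Di X k} (hh : ∀ m, IsLM o h m → TrivialMod o S h) :
    TrivialMod o S h := by
  rcases eq_or_ne h 0 with rfl | h0
  · exact trivialMod_zero
  · obtain ⟨m, hm⟩ := exists_isLM o h0
    exact hh m hm

/-- For `r = 0` the bound in `TrivialMod` is vacuous, so the empty representation is used. -/
theorem TrivialMod.exists_sum_dlt {r : Di X k} {m : DiWord X} (hr : TrivialMod o S r)
    (hrm : ∀ u ∈ r.support, o.dlt u m) :
    ∃ (n : ℕ) (α : Fin n → k) (g : Fin n → Di X k), (∀ i, IsNormal o S (g i)) ∧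
      r = ∑ i, α i • g i ∧ ∀ i, α i ≠ 0 → ∀ mi, IsLM o (g i) mi → o.dlt mi m := by
  rcases eq_or_ne r 0 with rfl | hr0
  · exact ⟨0, Fin.elim0, Fin.elim0, fun i => i.elim0, by simp, fun i => i.elim0⟩
  obtain ⟨mr, hmr⟩ := exists_isLM o hr0
  obtain ⟨n, α, g, hg, hsum, hle⟩ := hr
  exact ⟨n, α, g, hg, hsum, fun i hi mi hmi => o.dle_dlt_trans (hle i hi mi mr hmi hmr)
    (hrm mr hmr.1)⟩

theorem TrivialMod.smul_add {r g : Di X k} {m : DiWord X} (hr : TrivialMod o S r)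
    (hrm : ∀ u ∈ r.support, o.dlt u m) (hg : IsNormal o S g) (hgm : IsLM o g m) (c : k)
    (hm : IsLM o (c • g + r) m) : TrivialMod o S (c • g + r) := by
  obtain ⟨n, α, gs, hgs, hsum, hlt⟩ := hr.exists_sum_dlt hrm
  refine ⟨n + 1, Fin.cons c α, Fin.cons g gs, Fin.cons hg hgs, ?_, ?_⟩
  · rw [Fin.sum_univ_succ, hsum]
    simp only [Fin.cons_zero, Fin.cons_succ]
  intro i hi mi mh hmi hmh
  obtain rfl := hmh.unique hm
  induction i using Fin.cases with
  | zero => exact Or.inl (hmi.unique hgm)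
  | succ j => exact Or.inr (hlt j hi mi hmi)

theorem trivialMod_of_forall_exists_normal (I : Submodule k (Di X k))
    (hcover : ∀ h ∈ I, ∀ m, IsLM o h m → ∃ g ∈ I, IsNormal o S g ∧ IsLM o g m ∧ g m = 1) :
    ∀ h ∈ I, TrivialMod o S h := by
  intro h hh
  refine trivialMod_of_forall_isLM fun m hm => ?_
  induction m using o.dlt_wf.induction generalizing h with
  | _ m ih =>
  obtain ⟨g, hgI, hg, hgm, hg1⟩ := hcover h hh m hm
  have hrm := dlt_of_mem_support_sub_smul hm hgm hg1
  have hr : TrivialMod o S (h - h m • g) := trivialMod_of_forall_isLM fun m' hm' =>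
    ih m' (hrm m' hm'.1) _ (I.sub_mem hh (I.smul_mem _ hgI)) hm'
  have hsplit : h = h m • g + (h - h m • g) := (add_sub_cancel _ _).symm
  rw [hsplit] at hm ⊢
  exact hr.smul_add hrm hg hgm _ hm

end Reduction

section Cover

variable (o : MonOrd X)

def leadingMonomials (I : Set (Di X k)) : Set (DiWord X) := {m | ∃ h ∈ I, IsLM o h m}

def labelOneWords (I : Set (Di X k)) : Set (Multiset X) :=
  {w | ∃ hw : w ≠ 0, DiWord.m1 w hw ∈ leadingMonomials o I}

/-- The leading monomials of `I` at which a Gröbner–Shirshov basis of `I` needs an element. -/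
def basicLeadingMonomials (I : Set (Di X k)) : Set (DiWord X) :=
  {m ∈ leadingMonomials o I | m.lbl = 2 ∨ Minimal (· ∈ labelOneWords o I) m.word}

theorem basicLeadingMonomials_finite [Finite X] (I : Set (Di X k)) :
    (basicLeadingMonomials o I).Finite := by
  have hcard : {w : Multiset X | Multiset.card w = 2}.Finite :=
    WellQuasiOrderedLE.finite_of_isAntichain fun v hv w hw hne hvw =>
      hne (Multiset.eq_of_le_of_card_le hvw (hw.trans hv.symm).le)
  have hmin : {w | Minimal (· ∈ labelOneWords o I) w}.Finite :=
    WellQuasiOrderedLE.finite_of_isAntichain (setOfPred_minimal_antichain _)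
  refine ((Set.Finite.union hcard hmin).prod (Set.toFinite {1, 2})).preimage
    Subtype.val_injective.injOn |>.subset ?_
  rintro m ⟨-, hm⟩
  refine ⟨?_, DiWord.lbl_eq_one_or_two m⟩
  rcases hm with h2 | hmin
  exacts [Or.inl (DiWord.card_word_of_lbl_eq_two h2), Or.inr hmin]

theorem exists_finite_monic_subset {K : Type*} [Field K] [Finite X]
    {I : Set (Di X K)} (hI : IsIdeal I) :
    ∃ S ⊆ I, S.Finite ∧ MonicSet o S ∧
      ∀ m ∈ basicLeadingMonomials o I, ∃ s ∈ S, IsLM o s m ∧ s m = 1 := by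
  have hmonic : ∀ m : basicLeadingMonomials o I, ∃ s ∈ I, IsLM o s m ∧ s m = 1 := by
    rintro ⟨m, ⟨h, hI', hm⟩, -⟩
    have hc : h m ≠ 0 := Finsupp.mem_support_iff.1 hm.1
    exact ⟨(h m)⁻¹ • h, hI.2.2.1 _ _ hI', hm.smul (inv_ne_zero hc), by simp [hc]⟩
  choose s hsI hsm hs1 using hmonic
  have := (basicLeadingMonomials_finite o I).to_subtype
  refine ⟨Set.range s, Set.range_subset_iff.2 hsI, Set.finite_range s, ?_, ?_⟩
  · rintro _ ⟨m, rfl⟩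
    exact ⟨m, hsm m, hs1 m⟩
  · exact fun m hm => ⟨s ⟨m, hm⟩, ⟨_, rfl⟩, hsm _, hs1 _⟩

variable {o}

theorem exists_normal_isLM_m1 {S : Set (Di X k)} {s : Di X k} (hs : s ∈ S) {b : Multiset X}
    {hb : b ≠ 0} (hsb : IsLM o s (DiWord.m1 b hb)) (hs1 : s (DiWord.m1 b hb) = 1)
    {w : Multiset X} (hw : w ≠ 0) (hbw : b ≤ w) :
    ∃ g, IsNormal o S g ∧ IsLM o g (DiWord.m1 w hw) ∧ g (DiWord.m1 w hw) = 1 := by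
  classical
  by_cases hbw' : b = w
  · subst hbw'
    exact ⟨s, Or.inl hs, hsb, hs1⟩
  have ha : w - b ≠ 0 := fun h => hbw' (le_antisymm hbw (tsub_eq_zero_iff_le.1 h))
  have hstrong := lt_word_of_isLM_of_lbl_eq_one hsb rfl
  have hpd : DiWord.pd (DiWord.m1 b hb) (DiWord.m1 (w - b) ha) = DiWord.m1 w hw :=
    DiWord.ext (add_tsub_cancel_of_le hbw) rfl
  obtain ⟨hlm, hcoeff⟩ := isLM_pL_m1 hsb hstrong (w - b) ha
  rw [hpd] at hlm hcoeff
  exact ⟨_, Or.inr (Or.inr ⟨s, hs, w - b, ha, ⟨_, hsb, hstrong⟩, rfl⟩), hlm, hcoeff.trans hs1⟩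

theorem exists_normal_isLM {I S : Set (Di X k)}
    (hS : ∀ m ∈ basicLeadingMonomials o I, ∃ s ∈ S, IsLM o s m ∧ s m = 1)
    {m : DiWord X} (hm : m ∈ leadingMonomials o I) :
    ∃ g, IsNormal o S g ∧ IsLM o g m ∧ g m = 1 := by
  rcases m.lbl_eq_one_or_two with h1 | h2
  · have hm1 : DiWord.m1 m.word m.word_ne = m := DiWord.ext rfl h1.symm
    obtain ⟨b, hbw, hbmin⟩ := exists_minimal_le_of_wellFoundedLT (· ∈ labelOneWords o I) m.word
      ⟨m.word_ne, hm1 ▸ hm⟩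
    obtain ⟨hb, hbI⟩ := hbmin.prop
    obtain ⟨s, hs, hsb, hs1⟩ := hS _ ⟨hbI, Or.inr hbmin⟩
    rw [← hm1]
    exact exists_normal_isLM_m1 hs hsb hs1 m.word_ne hbw
  · obtain ⟨s, hs, hsm, hs1⟩ := hS m ⟨hm, Or.inl h2⟩
    exact ⟨s, Or.inl hs, hsm, hs1⟩

end Cover

/-- If `X` is finite, then every ideal of the free commutative dialgebra `Di[X]` over a
field `k` has a finite Gröbner–Shirshov basis with respect to any monomial-center
ordering. -/
theorem finite_gsb_exists {Y K : Type*} [Fintype Y] [Field K] (o : MonOrd Y)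
    (I : Set (Di Y K)) (hI : IsIdeal I) :
    ∃ S : Set (Di Y K), S.Finite ∧ S ⊆ I ∧ MonicSet o S ∧
      {f | InIdeal S f} = I ∧ ∀ h, IsComp o S h → TrivialMod o S h := by
  obtain ⟨S, hSI, hSfin, hSmonic, hS⟩ := exists_finite_monic_subset o hI
  have htriv : ∀ h ∈ I, TrivialMod o S h :=
    trivialMod_of_forall_exists_normal hI.toSubmodule fun h hh m hm => by
      obtain ⟨g, hg, hgm, hg1⟩ := exists_normal_isLM hS ⟨h, hh, hm⟩
      exact ⟨g, hg.inIdeal.mem_of_subset hI hSI, hg, hgm, hg1⟩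
  refine ⟨S, hSfin, hSI, hSmonic, ?_, fun h hh => htriv h (hh.inIdeal.mem_of_subset hI hSI)⟩
  ext f
  exact ⟨fun hf => hf.mem_of_subset hI hSI, fun hf => (htriv f hf).inIdeal⟩

end CDi
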